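/- Suppose 0 < Z_SD < Z_SR and Z_RD > 0, S > 0. Define t2max = C(Z_SR·S) / ( C(Z_SR·S) + C((Z_SD + Z_RD)·S) − C(Z_SD·S) ) and, for t2 ∈ [0, t2max] with t1 = 1 − t2, define F(t2) = t1·log( (1 + Z_SD·S) / ( 1 + (Z_SD/Z_SR)·[ (1 + Z_RD·S/(1 + Z_SD·S))^{t2/t1} − 1 ] ) ) + t2·C((Z_SD + Z_RD)·S). Then the supremum of x1 + x2 + x3 over all feasible tuples (t1, t2, α, x1, x2, x3) of the three-node flow optimization problem equals the maximum of F(t2) over t2 ∈ [0, t2max]. -/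

import Mathlib

open Real

/-- Shannon-type capacity function `C(x) = log (1 + x)` (natural logarithm). -/
noncomputable def capC (x : ℝ) : ℝ := Real.log (1 + x)

/-- Feasibility of a tuple `(t1, t2, α, x1, x2, x3)` for the three-node
flow optimization problem with link gains `ZSD, ZSR, ZRD` and transmit SNR `S`. -/
def Feasible (ZSD ZSR ZRD S t1 t2 α x1 x2 x3 : ℝ) : Prop :=
  0 ≤ t1 ∧ 0 ≤ t2 ∧ t1 + t2 = 1 ∧ 0 ≤ α ∧ α ≤ 1 ∧
  0 ≤ x1 ∧ 0 ≤ x2 ∧ 0 ≤ x3 ∧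
  x2 ≤ t2 * capC (ZRD * S) ∧
  x3 ≤ t2 * capC (ZSD * S) ∧
  x2 + x3 ≤ t2 * capC ((ZSD + ZRD) * S) ∧
  (ZSR ≤ ZSD →
    x1 ≤ t1 * capC (ZSD * α * S) ∧
    x2 ≤ t1 * capC (ZSR * (1 - α) * S / (1 + ZSR * α * S))) ∧
  (ZSD < ZSR →
    x1 ≤ t1 * capC (ZSD * α * S / (1 + ZSD * (1 - α) * S)) ∧
    x2 ≤ t1 * capC (ZSR * (1 - α) * S))

/-!
Write `a, b, c` for the link SNRs `Z_SD·S, Z_SR·S, Z_RD·S` and `w = b·(1 - α)` for the SNR of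
the relay's message at `R`; the destination sees that message as interference `(a/b)·w`, so the
direct message gets `directRate a b w = log ((1 + a)/(1 + (a/b)·w))`. Every feasible rate is at
most both `t₁·directRate w + t₂·C(a + c)` and `t₁·(directRate w + C w) + t₂·C a`. The first bound
decreases in `w`, the second increases (because `a ≤ b`), so for fixed `t₂` the best `w` balances
`t₁·C w = t₂·(C(a + c) - C a)`, i.e. `1 + w = (1 + c/(1 + a))^(t₂/t₁)`, and the resulting rate
is `F t₂`. The balancing `w` reaches `b` exactly at `t₂ = t2max`; for larger `t₂` the second
bound is at most `t₁·C b + t₂·C a`, which decreases in `t₂` and equals `F t2max` there.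
Conversely the balanced choice is feasible for every `t₂ ≤ t2max`, and `F` is continuous on
`[0, t2max]`, so its maximum is attained and is the supremum.
-/

open Set

lemma capC_nonneg {x : ℝ} (hx : 0 ≤ x) : 0 ≤ capC x :=
  Real.log_nonneg (by linarith)

lemma capC_le_capC {x y : ℝ} (hx : 0 ≤ x) (hxy : x ≤ y) : capC x ≤ capC y :=
  Real.log_le_log (by linarith) (by linarith)

lemma capC_lt_capC {x y : ℝ} (hx : 0 ≤ x) (hxy : x < y) : capC x < capC y :=
  Real.log_lt_log (by linarith) (by linarith)

lemma capC_add_le {x y : ℝ} (hx : 0 ≤ x) (hy : 0 ≤ y) : capC (x + y) ≤ capC x + capC y := by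
  unfold capC
  rw [← Real.log_mul (by linarith) (by linarith)]
  exact Real.log_le_log (by linarith) (by nlinarith)

noncomputable def directRate (a b w : ℝ) : ℝ := Real.log ((1 + a) / (1 + a / b * w))

noncomputable def relayGain (a c t : ℝ) : ℝ := (1 + c / (1 + a)) ^ (t / (1 - t))

noncomputable def optRate (a b c t : ℝ) : ℝ :=
  (1 - t) * directRate a b (relayGain a c t - 1) + t * capC (a + c)

noncomputable def maxRelayTime (a b c : ℝ) : ℝ :=
  capC b / (capC b + capC (a + c) - capC a)

section
variable {a b c : ℝ}

lemma directRate_le_directRate (ha : 0 ≤ a) (hb : 0 ≤ b) {v w : ℝ} (hv : 0 ≤ v) (hvw : v ≤ w) :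
    directRate a b w ≤ directRate a b v := by
  have hk : 0 ≤ a / b := div_nonneg ha hb
  have hkv : 0 ≤ a / b * v := mul_nonneg hk hv
  have hkw : 0 ≤ a / b * w := mul_nonneg hk (hv.trans hvw)
  apply Real.log_le_log (div_pos (by linarith) (by linarith))
  exact div_le_div_of_nonneg_left (by linarith) (by linarith) (by gcongr)

lemma directRate_self (ha : 0 ≤ a) (hb : b ≠ 0) : directRate a b b = 0 := by
  rw [directRate, div_mul_cancel₀ a hb, div_self (by linarith), Real.log_one]

lemma directRate_add_capC_le (ha : 0 ≤ a) (hab : a ≤ b) (hb : 0 < b) {v w : ℝ} (hv : 0 ≤ v)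
    (hvw : v ≤ w) : directRate a b v + capC v ≤ directRate a b w + capC w := by
  have hk : 0 ≤ a / b := div_nonneg ha hb.le
  have hk1 : a / b ≤ 1 := (div_le_one hb).2 hab
  have hkv : 0 ≤ a / b * v := mul_nonneg hk hv
  have hkw : 0 ≤ a / b * w := mul_nonneg hk (hv.trans hvw)
  have hquot : (1 + v) / (1 + a / b * v) ≤ (1 + w) / (1 + a / b * w) := by
    rw [div_le_div_iff₀ (by linarith) (by linarith)]
    nlinarith [mul_nonneg (sub_nonneg.2 hk1) (sub_nonneg.2 hvw)]
  have hlog := Real.log_le_log (by positivity) hquot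
  unfold directRate capC
  rw [Real.log_div (by linarith) (by linarith), Real.log_div (by linarith) (by linarith)] at hlog ⊢
  linarith

lemma one_le_relayGain (ha : 0 ≤ a) (hc : 0 ≤ c) {t : ℝ} (ht0 : 0 ≤ t) (ht1 : t ≤ 1) :
    1 ≤ relayGain a c t := by
  have : 0 ≤ c / (1 + a) := by positivity
  exact Real.one_le_rpow (by linarith) (div_nonneg ht0 (by linarith))

lemma relayGain_le_relayGain (ha : 0 ≤ a) (hc : 0 ≤ c) {s t : ℝ} (hs : 0 ≤ s) (hst : s ≤ t)
    (ht : t < 1) : relayGain a c s ≤ relayGain a c t := by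
  have : 0 ≤ c / (1 + a) := by positivity
  exact Real.rpow_le_rpow_of_exponent_le (by linarith)
    (div_le_div₀ (by linarith) hst (by linarith) (by linarith))

lemma mul_capC_relayGain_sub_one (ha : 0 ≤ a) (hc : 0 ≤ c) {t : ℝ} (ht : t ≠ 1) :
    (1 - t) * capC (relayGain a c t - 1) = t * (capC (a + c) - capC a) := by
  have hr : 0 < 1 + c / (1 + a) := by positivity
  have hlog : Real.log (1 + c / (1 + a)) = capC (a + c) - capC a := by
    unfold capC
    rw [← Real.log_div (by linarith) (by linarith)]
    congr 1
    field_simp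
    ring
  rw [capC, add_sub_cancel, relayGain, Real.log_rpow hr, hlog,
    ← mul_assoc, mul_div_cancel₀ _ (sub_ne_zero.2 (Ne.symm ht))]

lemma maxRelayTime_lt_one (ha : 0 ≤ a) (hb : 0 ≤ b) (hc : 0 < c) : maxRelayTime a b c < 1 := by
  have := capC_lt_capC ha (lt_add_of_pos_right a hc)
  have := capC_nonneg hb
  rw [maxRelayTime, div_lt_one (by linarith)]
  linarith

lemma maxRelayTime_pos (ha : 0 ≤ a) (hb : 0 < b) (hc : 0 < c) : 0 < maxRelayTime a b c := by
  have := capC_lt_capC ha (lt_add_of_pos_right a hc)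
  have : 0 < capC b := Real.log_pos (by linarith)
  exact div_pos this (by linarith)

lemma maxRelayTime_mul (ha : 0 ≤ a) (hb : 0 ≤ b) (hc : 0 < c) :
    maxRelayTime a b c * (capC (a + c) - capC a) = (1 - maxRelayTime a b c) * capC b := by
  have := capC_lt_capC ha (lt_add_of_pos_right a hc)
  have := capC_nonneg hb
  have hne : capC b + capC (a + c) - capC a ≠ 0 := by linarith
  rw [maxRelayTime]
  field_simp
  ring

lemma relayGain_maxRelayTime (ha : 0 ≤ a) (hb : 0 ≤ b) (hc : 0 < c) :
    relayGain a c (maxRelayTime a b c) = 1 + b := by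
  set T := maxRelayTime a b c
  have hT : 0 < 1 - T := sub_pos.2 (maxRelayTime_lt_one ha hb hc)
  have hbal := mul_capC_relayGain_sub_one ha hc.le (maxRelayTime_lt_one ha hb hc).ne
  have hρ : 0 < relayGain a c T := Real.rpow_pos_of_pos (by positivity) _
  rw [maxRelayTime_mul ha hb hc] at hbal
  have hlog : Real.log (1 + (relayGain a c T - 1)) = Real.log (1 + b) :=
    mul_left_cancel₀ hT.ne' hbal
  have := Real.log_injOn_pos (by simp; linarith) (by simp; linarith) hlog
  linarith

lemma optRate_maxRelayTime (ha : 0 ≤ a) (hb : 0 < b) (hc : 0 < c) :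
    optRate a b c (maxRelayTime a b c)
      = (1 - maxRelayTime a b c) * capC b + maxRelayTime a b c * capC a := by
  have hbal := maxRelayTime_mul ha hb.le hc
  rw [optRate, relayGain_maxRelayTime ha hb.le hc, add_sub_cancel_left, directRate_self ha hb.ne']
  linarith

lemma le_optRate_of_le_maxRelayTime (ha : 0 ≤ a) (hab : a ≤ b) (hb : 0 < b) (hc : 0 < c)
    {t w R : ℝ} (ht : 0 ≤ t) (htT : t ≤ maxRelayTime a b c) (hw : 0 ≤ w)
    (hcut : R ≤ (1 - t) * directRate a b w + t * capC (a + c))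
    (hmac : R ≤ (1 - t) * (directRate a b w + capC w) + t * capC a) :
    R ≤ optRate a b c t := by
  have ht1 : t < 1 := htT.trans_lt (maxRelayTime_lt_one ha hb.le hc)
  have hw' : 0 ≤ relayGain a c t - 1 := sub_nonneg.2 (one_le_relayGain ha hc.le ht ht1.le)
  rcases le_total (relayGain a c t - 1) w with h | h
  · calc R ≤ (1 - t) * directRate a b w + t * capC (a + c) := hcut
      _ ≤ optRate a b c t := by
        rw [optRate]
        gcongr
        exact directRate_le_directRate ha hb.le hw' h
  · have hbal := mul_capC_relayGain_sub_one ha hc.le ht1.ne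
    have hmono := mul_le_mul_of_nonneg_left (directRate_add_capC_le ha hab hb hw h)
      (sub_nonneg.2 ht1.le)
    rw [optRate]
    linarith

lemma le_optRate_maxRelayTime_of_le (ha : 0 ≤ a) (hab : a ≤ b) (hb : 0 < b) (hc : 0 < c)
    {t w R : ℝ} (hTt : maxRelayTime a b c ≤ t) (ht1 : t ≤ 1) (hw : 0 ≤ w) (hwb : w ≤ b)
    (hmac : R ≤ (1 - t) * (directRate a b w + capC w) + t * capC a) :
    R ≤ optRate a b c (maxRelayTime a b c) := by
  have hwb' := directRate_add_capC_le ha hab hb hw hwb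
  rw [directRate_self ha hb.ne', zero_add] at hwb'
  have hab' := capC_le_capC ha hab
  calc R ≤ (1 - t) * capC b + t * capC a := hmac.trans (by gcongr)
    _ ≤ (1 - maxRelayTime a b c) * capC b + maxRelayTime a b c * capC a := by
        nlinarith [mul_nonneg (sub_nonneg.2 hTt) (sub_nonneg.2 hab')]
    _ = optRate a b c (maxRelayTime a b c) := (optRate_maxRelayTime ha hb hc).symm

lemma continuousOn_optRate (ha : 0 ≤ a) (hb : 0 ≤ b) (hc : 0 ≤ c) :
    ContinuousOn (optRate a b c) (Ico 0 1) := by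
  have hr : 0 < 1 + c / (1 + a) := by positivity
  have hden : ∀ t ∈ Ico (0 : ℝ) 1, 1 ≤ 1 + a / b * (relayGain a c t - 1) := fun t ht => by
    have := one_le_relayGain ha hc ht.1 ht.2.le
    have : 0 ≤ a / b * (relayGain a c t - 1) := mul_nonneg (div_nonneg ha hb) (by linarith)
    linarith
  have hgain : ContinuousOn (relayGain a c) (Ico 0 1) := by
    refine ContinuousOn.rpow continuousOn_const ?_ fun _ _ => Or.inl hr.ne'
    exact continuousOn_id.div (continuousOn_const.sub continuousOn_id)
      fun t ht => (sub_pos.2 ht.2).ne'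
  unfold optRate directRate
  refine ((continuousOn_const.sub continuousOn_id).mul ?_).add
    (continuousOn_id.mul continuousOn_const)
  refine ContinuousOn.log ?_ fun t ht => (div_pos (by linarith) (by linarith [hden t ht])).ne'
  exact continuousOn_const.div (continuousOn_const.add (continuousOn_const.mul
    (hgain.sub continuousOn_const))) fun t ht => by linarith [hden t ht]

end

section
variable {ZSD ZSR ZRD S : ℝ}

lemma capC_broadcast_eq_directRate {α : ℝ} (hZSR : ZSR ≠ 0) (hS : S ≠ 0)
    (hpos : 0 < 1 + ZSD * (1 - α) * S) :
    capC (ZSD * α * S / (1 + ZSD * (1 - α) * S))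
      = directRate (ZSD * S) (ZSR * S) (ZSR * (1 - α) * S) := by
  have hint : ZSD * S / (ZSR * S) * (ZSR * (1 - α) * S) = ZSD * (1 - α) * S := by
    field_simp
  unfold capC directRate
  rw [hint, one_add_div hpos.ne']
  ring_nf

lemma Feasible.exists_relayPower {t1 t2 α x1 x2 x3 : ℝ}
    (h : Feasible ZSD ZSR ZRD S t1 t2 α x1 x2 x3) (hZSD : 0 ≤ ZSD) (hZ : ZSD < ZSR)
    (hS : 0 < S) :
    ∃ w ∈ Icc 0 (ZSR * S),
      x1 ≤ t1 * directRate (ZSD * S) (ZSR * S) w ∧ x2 ≤ t1 * capC w := by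
  obtain ⟨-, -, -, hα0, hα1, -, -, -, -, -, -, -, hbc⟩ := h
  obtain ⟨hx1, hx2⟩ := hbc hZ
  have hZSR : 0 < ZSR := hZSD.trans_lt hZ
  have hpos : 0 < 1 + ZSD * (1 - α) * S := by
    have : 0 ≤ ZSD * (1 - α) * S := by
      have := sub_nonneg.2 hα1
      positivity
    linarith
  refine ⟨ZSR * (1 - α) * S, ⟨?_, ?_⟩, ?_, hx2⟩
  · have := sub_nonneg.2 hα1
    positivity
  · nlinarith [mul_nonneg (mul_nonneg hZSR.le hα0) hS.le]
  · rwa [← capC_broadcast_eq_directRate hZSR.ne' hS.ne' hpos]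

lemma Feasible.exists_le_optRate {t1 t2 α x1 x2 x3 : ℝ}
    (h : Feasible ZSD ZSR ZRD S t1 t2 α x1 x2 x3) (hZSD : 0 ≤ ZSD) (hZ : ZSD < ZSR)
    (hZRD : 0 < ZRD) (hS : 0 < S) :
    ∃ t ∈ Icc 0 (maxRelayTime (ZSD * S) (ZSR * S) (ZRD * S)),
      x1 + x2 + x3 ≤ optRate (ZSD * S) (ZSR * S) (ZRD * S) t := by
  obtain ⟨w, ⟨hw0, hwb⟩, hx1, hx2⟩ := h.exists_relayPower hZSD hZ hS
  obtain ⟨ht1, ht2, hsum, -, -, -, -, -, -, hx3, hx23, -⟩ := h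
  obtain rfl : t1 = 1 - t2 := by linarith
  rw [add_mul] at hx23
  have ha : 0 ≤ ZSD * S := by positivity
  have hab : ZSD * S ≤ ZSR * S := by nlinarith
  have hb : 0 < ZSR * S := by nlinarith
  have hc : 0 < ZRD * S := by positivity
  rcases le_total t2 (maxRelayTime (ZSD * S) (ZSR * S) (ZRD * S)) with hT | hT
  · exact ⟨t2, ⟨ht2, hT⟩, le_optRate_of_le_maxRelayTime ha hab hb hc ht2 hT hw0
      (by linarith) (by linarith)⟩
  · exact ⟨_, ⟨(maxRelayTime_pos ha hb hc).le, le_rfl⟩,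
      le_optRate_maxRelayTime_of_le ha hab hb hc hT (by linarith) hw0 hwb (by linarith)⟩

lemma exists_feasible_eq_optRate (hZSD : 0 ≤ ZSD) (hZ : ZSD < ZSR) (hZRD : 0 < ZRD)
    (hS : 0 < S) {t : ℝ} (ht : t ∈ Icc 0 (maxRelayTime (ZSD * S) (ZSR * S) (ZRD * S))) :
    ∃ α x1 x2 x3, Feasible ZSD ZSR ZRD S (1 - t) t α x1 x2 x3 ∧
      x1 + x2 + x3 = optRate (ZSD * S) (ZSR * S) (ZRD * S) t := by
  obtain ⟨ht0, htT⟩ := ht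
  have hZSR : 0 < ZSR := hZSD.trans_lt hZ
  have ha : 0 ≤ ZSD * S := by positivity
  have hb : 0 < ZSR * S := by positivity
  have hc : 0 < ZRD * S := by positivity
  have ht1 : t < 1 := htT.trans_lt (maxRelayTime_lt_one ha hb.le hc)
  set w := relayGain (ZSD * S) (ZRD * S) t - 1
  have hw0 : 0 ≤ w := sub_nonneg.2 (one_le_relayGain ha hc.le ht0 ht1.le)
  have hwb : w ≤ ZSR * S := by
    have := relayGain_le_relayGain ha hc.le ht0 htT (maxRelayTime_lt_one ha hb.le hc)
    rw [relayGain_maxRelayTime ha hb.le hc] at this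
    linarith
  have hbal := mul_capC_relayGain_sub_one ha hc.le ht1.ne
  have hw : ZSR * (1 - (1 - w / (ZSR * S))) * S = w := by
    rw [sub_sub_cancel]
    field_simp
  have hL := capC_add_le ha hc.le
  refine ⟨1 - w / (ZSR * S), (1 - t) * directRate (ZSD * S) (ZSR * S) w, (1 - t) * capC w,
    t * capC (ZSD * S), ⟨by linarith, ht0, by ring, ?_, ?_, ?_, ?_, ?_, ?_, le_rfl, ?_,
    fun h => absurd h (not_le.2 hZ), fun _ => ⟨?_, by rw [hw]⟩⟩, by rw [optRate]; linarith⟩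
  · rw [sub_nonneg, div_le_one hb]
    exact hwb
  · linarith [div_nonneg hw0 hb.le]
  · have := directRate_le_directRate ha hb.le hw0 hwb
    rw [directRate_self ha hb.ne'] at this
    exact mul_nonneg (by linarith) this
  · exact mul_nonneg (by linarith) (capC_nonneg hw0)
  · exact mul_nonneg ht0 (capC_nonneg ha)
  · rw [hbal]
    gcongr
    linarith
  · rw [add_mul]
    linarith
  · rw [capC_broadcast_eq_directRate hZSR.ne' hS.ne', hw]
    rw [sub_sub_cancel]
    positivity

end

/-- When `0 < Z_SD < Z_SR`, with
`t2max = C(Z_SR·S)/(C(Z_SR·S) + C((Z_SD+Z_RD)·S) − C(Z_SD·S))` and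
`F t2 = (1−t2)·log((1+Z_SD·S)/(1+(Z_SD/Z_SR)·[(1+Z_RD·S/(1+Z_SD·S))^(t2/(1−t2)) − 1]))
  + t2·C((Z_SD+Z_RD)·S)`,
the supremum of the achievable rate over all feasible tuples equals the maximum of
`F` over `t2 ∈ [0, t2max]`. -/
theorem sup_rate_eq_max_F
    (ZSD ZSR ZRD S : ℝ) (hZSD : 0 < ZSD) (hZ : ZSD < ZSR) (hZRD : 0 < ZRD)
    (hS : 0 < S)
    (t2max : ℝ)
    (ht2max : t2max = capC (ZSR * S) /
      (capC (ZSR * S) + capC ((ZSD + ZRD) * S) - capC (ZSD * S)))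
    (F : ℝ → ℝ)
    (hF : ∀ t2 : ℝ, F t2 =
      (1 - t2) * Real.log ((1 + ZSD * S) /
        (1 + (ZSD / ZSR) *
          ((1 + ZRD * S / (1 + ZSD * S)) ^ (t2 / (1 - t2)) - 1)))
      + t2 * capC ((ZSD + ZRD) * S)) :
    ∃ M : ℝ, IsGreatest (F '' Set.Icc 0 t2max) M ∧
      sSup {x : ℝ | ∃ t1 t2 α x1 x2 x3 : ℝ,
          Feasible ZSD ZSR ZRD S t1 t2 α x1 x2 x3 ∧ x = x1 + x2 + x3} = M := by
  obtain rfl : F = optRate (ZSD * S) (ZSR * S) (ZRD * S) := funext fun t => by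
    rw [hF, optRate, directRate, relayGain, mul_div_mul_right _ _ hS.ne', add_mul]
  obtain rfl : t2max = maxRelayTime (ZSD * S) (ZSR * S) (ZRD * S) := by
    rw [ht2max, maxRelayTime, add_mul]
  have ha : 0 ≤ ZSD * S := by positivity
  have hb : 0 < ZSR * S := mul_pos (hZSD.trans hZ) hS
  have hc : 0 < ZRD * S := by positivity
  obtain ⟨t, ht, hmax⟩ := isCompact_Icc.exists_isMaxOn
    (nonempty_Icc.2 (maxRelayTime_pos ha hb hc).le)
    ((continuousOn_optRate ha hb.le hc.le).mono
      (Icc_subset_Ico_right (maxRelayTime_lt_one ha hb.le hc)))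
  refine ⟨_, ⟨mem_image_of_mem _ ht, forall_mem_image.2 fun s hs => hmax hs⟩,
    IsGreatest.csSup_eq ⟨?_, ?_⟩⟩
  · obtain ⟨α, x1, x2, x3, hfeas, hsum⟩ := exists_feasible_eq_optRate hZSD.le hZ hZRD hS ht
    exact ⟨_, _, α, x1, x2, x3, hfeas, hsum.symm⟩
  · rintro x ⟨t1, t2, α, x1, x2, x3, hfeas, rfl⟩
    obtain ⟨s, hs, hle⟩ := hfeas.exists_le_optRate hZSD.le hZ hZRD hS
    exact hle.trans (hmax hs)
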